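/- Let S₀ be the 8×8 diagonal matrix diag(p_ρ/ρ², 1, 1, 1, e_θ/θ, τ/(κρθ), τ/(κρθ), τ/(κρθ)) with all parameters p_ρ, ρ, e_θ, θ, τ, κ > 0. Then S₀ is symmetric positive definite, and for every ξ ∈ ℝ³, S₀·A₀(ξ) is symmetric, where A₀(ξ) is the symbol of the Cattaneo-Christov-Jordan system with coefficients α = p_ρ/ρ, η = p_θ/ρ, β = θp_θ/(ρe_θ), γ = 1/(ρe_θ), δ = κ/τ. -/

import Mathlib

open Finset Matrix

/-- The Friedrichs symmetrizer `S₀` of the Cattaneo-Christov-Jordan system. -/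
noncomputable def S0mat (pρ eθ κ ρ θ τ : ℝ) : Matrix (Fin 8) (Fin 8) ℝ :=
  Matrix.diagonal ![pρ / ρ ^ 2, 1, 1, 1, eθ / θ, τ / (κ * ρ * θ), τ / (κ * ρ * θ), τ / (κ * ρ * θ)]

/-- The symbol `A₀(ξ)` of the Cattaneo-Christov-Jordan system. -/
noncomputable def A0ccj (pρ pθ eθ κ ρ θ τ : ℝ) (v ξ : Fin 3 → ℝ) : Matrix (Fin 8) (Fin 8) ℝ :=
  let w : ℝ := ∑ i, v i * ξ i
  let α := pρ / ρ; let η := pθ / ρ; let β := θ * pθ / (ρ * eθ)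
  let γ := 1 / (ρ * eθ); let δ := κ / τ
  !![w,        ρ * ξ 0,  ρ * ξ 1,  ρ * ξ 2,  0,        0, 0, 0;
     α * ξ 0,  w,        0,        0,        η * ξ 0,  0, 0, 0;
     α * ξ 1,  0,        w,        0,        η * ξ 1,  0, 0, 0;
     α * ξ 2,  0,        0,        w,        η * ξ 2,  0, 0, 0;
     0,        β * ξ 0,  β * ξ 1,  β * ξ 2,  w,        γ * ξ 0, γ * ξ 1, γ * ξ 2;
     0,        0,        0,        0,        δ * ξ 0,  w, 0, 0;
     0,        0,        0,        0,        δ * ξ 1,  0, w, 0;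
     0,        0,        0,        0,        δ * ξ 2,  0, 0, w]


/-!
`S₀` is diagonal with weights `sᵢ`, so `S₀ A₀(ξ)` is symmetric exactly when `sⱼ aⱼᵢ = sᵢ aᵢⱼ`
for every off-diagonal pair. `A₀` couples density with velocity (`ρ` against `p_ρ/ρ`), velocity
with temperature (`p_θ/ρ` against `θp_θ/(ρe_θ)`) and temperature with heat flux
(`1/(ρe_θ)` against `κ/τ`), and the weights `p_ρ/ρ²`, `e_θ/θ`, `τ/(κρθ)` are chosen so that
each of these three couplings balances; their positivity gives positive definiteness.
-/

theorem Matrix.isSymm_diagonal_mul_iff {n R : Type*} [Fintype n] [DecidableEq n]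
    [NonUnitalNonAssocSemiring R] (d : n → R) (A : Matrix n n R) :
    (diagonal d * A).IsSymm ↔ ∀ i j, d j * A j i = d i * A i j := by
  simp only [IsSymm.ext_iff, diagonal_mul]

section Coupling

variable {pρ pθ eθ κ ρ θ τ : ℝ}

lemma density_velocity_coupling (hρ : ρ ≠ 0) (x : ℝ) :
    pρ / ρ ^ 2 * (ρ * x) = pρ / ρ * x := by
  field_simp

lemma velocity_temperature_coupling (heθ : eθ ≠ 0) (hρ : ρ ≠ 0) (hθ : θ ≠ 0) (x : ℝ) :
    eθ / θ * (θ * pθ / (ρ * eθ) * x) = pθ / ρ * x := by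
  field_simp

lemma temperature_flux_coupling (heθ : eθ ≠ 0) (hκ : κ ≠ 0) (hρ : ρ ≠ 0) (hθ : θ ≠ 0)
    (hτ : τ ≠ 0) (x : ℝ) :
    τ / (κ * ρ * θ) * (κ / τ * x) = eθ / θ * (1 / (ρ * eθ) * x) := by
  field_simp

end Coupling

theorem S0mat_posDef {pρ eθ κ ρ θ τ : ℝ} (hpρ : 0 < pρ) (heθ : 0 < eθ) (hκ : 0 < κ)
    (hρ : 0 < ρ) (hθ : 0 < θ) (hτ : 0 < τ) : (S0mat pρ eθ κ ρ θ τ).PosDef := by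
  refine .diagonal fun i => ?_
  fin_cases i <;>
    simp only [Fin.zero_eta, Fin.mk_one, Fin.reduceFinMk, cons_val_zero, cons_val_one,
      Matrix.cons_val] <;>
    positivity

theorem S0mat_mul_A0ccj_isSymm {pρ pθ eθ κ ρ θ τ : ℝ} (heθ : eθ ≠ 0) (hκ : κ ≠ 0)
    (hρ : ρ ≠ 0) (hθ : θ ≠ 0) (hτ : τ ≠ 0) (v ξ : Fin 3 → ℝ) :
    (S0mat pρ eθ κ ρ θ τ * A0ccj pρ pθ eθ κ ρ θ τ v ξ).IsSymm := by
  rw [S0mat, isSymm_diagonal_mul_iff]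
  intro i j
  fin_cases i <;> fin_cases j <;>
    simp [A0ccj, density_velocity_coupling hρ, velocity_temperature_coupling heθ hρ hθ,
      temperature_flux_coupling heθ hκ hρ hθ hτ]

theorem stmt_16_general (pρ pθ eθ κ ρ θ τ : ℝ)
    (hpρ : 0 < pρ) (heθ : 0 < eθ) (hκ : 0 < κ)
    (hρ : 0 < ρ) (hθ : 0 < θ) (hτ : 0 < τ) (v : Fin 3 → ℝ) :
    (S0mat pρ eθ κ ρ θ τ).IsSymm ∧ (S0mat pρ eθ κ ρ θ τ).PosDef ∧
    ∀ ξ : Fin 3 → ℝ, (S0mat pρ eθ κ ρ θ τ * A0ccj pρ pθ eθ κ ρ θ τ v ξ).IsSymm :=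
  ⟨isSymm_diagonal _, S0mat_posDef hpρ heθ hκ hρ hθ hτ,
    S0mat_mul_A0ccj_isSymm heθ.ne' hκ.ne' hρ.ne' hθ.ne' hτ.ne' v⟩

theorem stmt_16 (pρ pθ eθ κ ρ θ τ : ℝ)
    (hpρ : 0 < pρ) (hpθ : 0 < pθ) (heθ : 0 < eθ) (hκ : 0 < κ)
    (hρ : 0 < ρ) (hθ : 0 < θ) (hτ : 0 < τ) (v : Fin 3 → ℝ) :
    (S0mat pρ eθ κ ρ θ τ).IsSymm ∧ (S0mat pρ eθ κ ρ θ τ).PosDef ∧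
    ∀ ξ : Fin 3 → ℝ, (S0mat pρ eθ κ ρ θ τ * A0ccj pρ pθ eθ κ ρ θ τ v ξ).IsSymm :=
  stmt_16_general pρ pθ eθ κ ρ θ τ hpρ heθ hκ hρ hθ hτ v
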